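/- Let G be the group presented with two generators p, γ and the relations p⁹ = 1 and γ⁻¹pγ = p⁴. Then the image of the generator p in G has order exactly 9. -/

import Mathlib

namespace ClassicalZariski.Stmt4

/-- `p` in the free group on the two generators `p, γ`. -/
def p : FreeGroup (Fin 2) := FreeGroup.of 0

/-- `γ` in the free group on the two generators. -/
def g : FreeGroup (Fin 2) := FreeGroup.of 1

/-- The relations `p⁹ = 1` and `γ⁻¹ p γ = p⁴`. -/
def rels : Set (FreeGroup (Fin 2)) :=
  { p ^ 9, (g⁻¹ * p * g) * (p ^ 4)⁻¹ }

/-- The group `G` presented by generators `p, γ` and relations `p⁹ = 1`, `γ⁻¹ p γ = p⁴`. -/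
def G : Type := PresentedGroup rels

instance : Group G := by unfold G; infer_instance

def mulSeven : Equiv.Perm (ZMod 9) :=
  ⟨(7 * ·), (4 * ·), by decide, by decide⟩

/-- Conjugating the translation `x ↦ x + 1` by `x ↦ 7 x` gives translation by `7⁻¹ = 4`,
so `p ↦ (· + 1)`, `γ ↦ (7 * ·)` respects both relations. -/
theorem lift_affine_rels_eq_one :
    ∀ r ∈ rels, FreeGroup.lift ![Equiv.addRight (1 : ZMod 9), mulSeven] r = 1 := by
  rintro r (rfl | rfl | ⟨⟩) <;>
    simp only [p, g, map_mul, map_inv, map_pow, FreeGroup.lift_apply_of] <;> decide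

def affineRep : PresentedGroup rels →* Equiv.Perm (ZMod 9) :=
  PresentedGroup.toGroup lift_affine_rels_eq_one

theorem affineRep_of_zero : affineRep (PresentedGroup.of 0) = Equiv.addRight 1 :=
  PresentedGroup.toGroup.of lift_affine_rels_eq_one

theorem of_zero_pow_nine : (PresentedGroup.of 0 : PresentedGroup rels) ^ 9 = 1 :=
  (map_pow (PresentedGroup.mk rels) p 9).symm.trans (PresentedGroup.one_of_mem (Or.inl rfl))

theorem of_zero_pow_three_ne_one : (PresentedGroup.of 0 : PresentedGroup rels) ^ 3 ≠ 1 := by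
  intro h
  have h' := congrArg affineRep h
  rw [map_pow, affineRep_of_zero, map_one] at h'
  exact absurd h' (by decide)

theorem orderOf_p : orderOf (PresentedGroup.of 0 : G) = 9 :=
  orderOf_eq_prime_pow (p := 3) (n := 1) of_zero_pow_three_ne_one of_zero_pow_nine

end ClassicalZariski.Stmt4
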